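/- Let M = [[a,b],[c,d]] be a 2×2 integer matrix with det M ≠ 0, and let f ∈ ℤ[x] be nonconstant and irreducible in ℤ[x]. If deg(μ_M(f)) = deg f, then the primitive part of μ_M(f) (i.e. μ_M(f) divided by its content, normalized to have positive leading coefficient) is irreducible in ℤ[x]. -/

import Mathlib

/-- The Möbius transform of `f` induced by the matrix `[[a,b],[c,d]]`:
`μ_M(f) = Σ_{j≤n} f_j (ax+b)^j (cx+d)^(n-j)` where `n = deg f`. -/
noncomputable def mobius (a b c d : ℤ) (f : Polynomial ℤ) : Polynomial ℤ :=
  ∑ j ∈ Finset.range (f.natDegree + 1),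
    Polynomial.C (f.coeff j) * (Polynomial.C a * Polynomial.X + Polynomial.C b) ^ j *
      (Polynomial.C c * Polynomial.X + Polynomial.C d) ^ (f.natDegree - j)

/-! Let `F(x, y) = y^n f(x/y)` be the binary form of `f`, `n = deg f`. Then
`μ_M f = F(ax + b, cx + d)`, so `μ_M` is multiplicative, and when `deg μ_M f = n` the
adjugate matrix undoes it: `μ_{adj M}(μ_M f) = (det M)^n f`. A factorization `μ_M f = q r`
therefore gives `(det M)^n f = μ_{adj M} q · μ_{adj M} r` with `deg μ_{adj M} q ≤ deg q` and
`deg μ_{adj M} r ≤ deg r`; since `f` is prime in `ℤ[x]`, one of `q`, `r` has degree `n` and the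
other is constant, hence a unit once `q r` is primitive. -/

open Polynomial

lemma MvPolynomial.IsHomogeneous.aeval_smul {σ R A : Type*} [CommSemiring R]
    [CommSemiring A] [Algebra R A] {F : MvPolynomial σ R} {n : ℕ} (hF : F.IsHomogeneous n)
    (r : A) (g : σ → A) :
    MvPolynomial.aeval (r • g) F = r ^ n * MvPolynomial.aeval g F := by
  conv_lhs => rw [F.as_sum]
  conv_rhs => rw [F.as_sum]
  simp only [map_sum, Finset.mul_sum, MvPolynomial.aeval_monomial, Pi.smul_apply, smul_eq_mul,
    mul_pow, Finsupp.prod_mul]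
  refine Finset.sum_congr rfl fun s hs => ?_
  rw [Finsupp.prod, Finset.prod_pow_eq_pow_sum, ← hF.degree_eq_sum_deg_support hs]
  ring

namespace Polynomial

variable {R : Type*} [CommSemiring R]

lemma homogenize_C_mul_X_add_C (a b : R) :
    (C a * X + C b).homogenize 1 =
      MvPolynomial.C a * MvPolynomial.X 0 + MvPolynomial.C b * MvPolynomial.X 1 := by
  simp only [homogenize_add, homogenize_C_mul, homogenize_X one_ne_zero, homogenize_C]
  simp

lemma homogenize_aeval {σ : Type*} {F : MvPolynomial σ R} {n : ℕ} (hF : F.IsHomogeneous n)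
    (g : σ → R[X]) (hg : ∀ i, (g i).natDegree ≤ 1) :
    (MvPolynomial.aeval g F).homogenize n =
      MvPolynomial.aeval (fun i => (g i).homogenize 1) F := by
  apply homogenize_eq_of_isHomogeneous
  · simpa using hF.aeval _ fun i => isHomogeneous_homogenize (n := 1) (g i)
  · rw [MvPolynomial.comp_aeval_apply]
    simp [hg]

lemma IsPrimitive.isUnit_of_dvd_of_natDegree_eq_zero {p q : R[X]} (hp : p.IsPrimitive)
    (hq : q ∣ p) (hq0 : q.natDegree = 0) : IsUnit q := by
  obtain ⟨r, rfl⟩ := natDegree_eq_zero.mp hq0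
  exact isUnit_C.mpr (hp r hq)

lemma IsPrimitive.irreducible_of_forall_dvd_natDegree_eq_zero_or_eq [NoZeroDivisors R]
    [Nontrivial R] {p : R[X]} (hp : p.IsPrimitive) (hpos : 0 < p.natDegree)
    (hdvd : ∀ q, q ∣ p → q.natDegree = 0 ∨ q.natDegree = p.natDegree) : Irreducible p := by
  refine ⟨fun hu => hpos.ne' (natDegree_eq_zero_of_isUnit hu), fun g h hgh => ?_⟩
  subst hgh
  have hdeg := natDegree_mul (left_ne_zero_of_mul hp.ne_zero) (right_ne_zero_of_mul hp.ne_zero)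
  rcases hdvd g (dvd_mul_right g h) with hg | hg
  · exact .inl (hp.isUnit_of_dvd_of_natDegree_eq_zero (dvd_mul_right g h) hg)
  · exact .inr (hp.isUnit_of_dvd_of_natDegree_eq_zero (dvd_mul_left h g) (by omega))

end Polynomial

lemma mobius_eq_aeval_homogenize (a b c d : ℤ) (f : ℤ[X]) :
    mobius a b c d f =
      MvPolynomial.aeval ![C a * X + C b, C c * X + C d] (f.homogenize f.natDegree) := by
  simp only [mobius, homogenize, Finset.Nat.sum_antidiagonal_eq_sum_range_succ_mk, map_sum,
    MvPolynomial.aeval_monomial]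
  refine Finset.sum_congr rfl fun j _ => ?_
  simp [Finsupp.prod_fintype, mul_assoc]

lemma mobius_zero (a b c d : ℤ) : mobius a b c d 0 = 0 := by
  simp [mobius]

lemma mobius_mul (a b c d : ℤ) (g h : ℤ[X]) :
    mobius a b c d (g * h) = mobius a b c d g * mobius a b c d h := by
  rcases eq_or_ne g 0 with rfl | hg
  · simp [mobius_zero]
  rcases eq_or_ne h 0 with rfl | hh
  · simp [mobius_zero]
  simp only [mobius_eq_aeval_homogenize, natDegree_mul hg hh,
    homogenize_mul g h le_rfl le_rfl, map_mul]

lemma natDegree_mobius_le (a b c d : ℤ) (f : ℤ[X]) :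
    (mobius a b c d f).natDegree ≤ f.natDegree := by
  refine natDegree_sum_le_of_forall_le _ _ fun j hj => ?_
  have hj : j ≤ f.natDegree := Nat.lt_succ_iff.mp (Finset.mem_range.mp hj)
  calc _ ≤ 0 + j * 1 + (f.natDegree - j) * 1 :=
        natDegree_mul_le_of_le (natDegree_mul_le_of_le (natDegree_C _).le
          (natDegree_pow_le_of_le _ natDegree_linear_le))
          (natDegree_pow_le_of_le _ natDegree_linear_le)
    _ = f.natDegree := by omega

lemma mobius_adjugate_mobius (a b c d : ℤ) (f : ℤ[X])
    (hdeg : (mobius a b c d f).natDegree = f.natDegree) :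
    mobius d (-b) (-c) a (mobius a b c d f) = C ((a * d - b * c) ^ f.natDegree) * f := by
  have hsubst : (fun i => MvPolynomial.aeval ![C d * X + C (-b), C (-c) * X + C a]
      ((![C a * X + C b, C c * X + C d] i).homogenize 1)) = C (a * d - b * c) • ![X, 1] := by
    ext i : 1
    fin_cases i <;>
      simp only [Fin.zero_eta, Fin.mk_one, Matrix.cons_val_zero, Matrix.cons_val_one,
        homogenize_C_mul_X_add_C] <;> simp <;> ring
  rw [mobius_eq_aeval_homogenize d, hdeg, mobius_eq_aeval_homogenize,
    homogenize_aeval (isHomogeneous_homogenize f) _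
      (fun i => by fin_cases i <;> exact natDegree_linear_le),
    MvPolynomial.comp_aeval_apply, hsubst, (isHomogeneous_homogenize f).aeval_smul,
    aeval_homogenize_X_one _ le_rfl, C_pow]

lemma natDegree_eq_zero_or_eq_of_dvd_mobius {a b c d : ℤ} (hdet : a * d - b * c ≠ 0)
    {f : ℤ[X]} (hirr : Irreducible f) (hdeg : (mobius a b c d f).natDegree = f.natDegree)
    {q : ℤ[X]} (hq : q ∣ mobius a b c d f) :
    q.natDegree = 0 ∨ q.natDegree = f.natDegree := by
  obtain ⟨r, hr⟩ := hq
  have hfactor : C ((a * d - b * c) ^ f.natDegree) * f =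
      mobius d (-b) (-c) a q * mobius d (-b) (-c) a r := by
    rw [← mobius_mul, ← hr, mobius_adjugate_mobius a b c d f hdeg]
  have hne : mobius d (-b) (-c) a q * mobius d (-b) (-c) a r ≠ 0 :=
    hfactor ▸ mul_ne_zero (C_ne_zero.mpr (pow_ne_zero _ hdet)) hirr.ne_zero
  have hq0 : q ≠ 0 := by rintro rfl; simp [mobius_zero] at hne
  have hr0 : r ≠ 0 := by rintro rfl; simp [mobius_zero] at hne
  have hsum : q.natDegree + r.natDegree = f.natDegree := by
    rw [← natDegree_mul hq0 hr0, ← hr, hdeg]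
  have hq_le := natDegree_mobius_le d (-b) (-c) a q
  have hr_le := natDegree_mobius_le d (-b) (-c) a r
  rcases hirr.prime.dvd_or_dvd (Dvd.intro_left _ hfactor) with hf | hf
  · have := natDegree_le_of_dvd hf (left_ne_zero_of_mul hne); omega
  · have := natDegree_le_of_dvd hf (right_ne_zero_of_mul hne); omega

/-- If `det M ≠ 0`, `f ∈ ℤ[x]` is nonconstant and irreducible, and
`deg(μ_M(f)) = deg f`, then the primitive part of `μ_M(f)` is irreducible in `ℤ[x]`. -/
theorem stmt8 (a b c d : ℤ) (hdet : a * d - b * c ≠ 0) (f : Polynomial ℤ)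
    (hf : 1 ≤ f.natDegree) (hirr : Irreducible f)
    (hdeg : (mobius a b c d f).natDegree = f.natDegree) :
    Irreducible (mobius a b c d f).primPart := by
  refine (isPrimitive_primPart _).irreducible_of_forall_dvd_natDegree_eq_zero_or_eq ?_
    fun q hq => ?_
  · rwa [natDegree_primPart, hdeg]
  · rw [natDegree_primPart, hdeg]
    exact natDegree_eq_zero_or_eq_of_dvd_mobius hdet hirr hdeg (hq.trans (primPart_dvd _))
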